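/- (Δ(α) − 1)/α → ∞ as α → 0 from the right; in particular Δ has no finite right derivative at 0. -/

import Mathlib

open Filter

/-- The digit sequence `u_α`: with `b = ⌈α⌉`, `u_α n = (b−1) + ⌈(α−b+1)(n+1)⌉ − ⌈(α−b+1)n⌉`,
the upper mechanical word of slope `α − b + 1` written over the alphabet `{b−1, b}`. -/
noncomputable def upperWord (α : ℝ) (n : ℕ) : ℤ :=
  (⌈α⌉ - 1) + (⌈(α - ⌈α⌉ + 1) * ((n : ℝ) + 1)⌉ - ⌈(α - ⌈α⌉ + 1) * (n : ℝ)⌉)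

/-- `Δ` is the devil's staircase function: `Δ 0 = 1` and, for each `α > 0`, `Δ α` is the
unique real `β > 1` satisfying `∑_{n=0}^∞ u_α(n)·β^{−(n+1)} = 1`. -/
def IsDevilStaircase (Δ : ℝ → ℝ) : Prop :=
  Δ 0 = 1 ∧ ∀ α : ℝ, 0 < α →
    (1 < Δ α ∧ ∑' n : ℕ, (upperWord α n : ℝ) / (Δ α) ^ (n + 1) = 1) ∧
    ∀ β : ℝ, 1 < β → (∑' n : ℕ, (upperWord α n : ℝ) / β ^ (n + 1) = 1) → β = Δ α

/-!
For small `α` the word `u_α` starts with the digit `1` and has a second `1` at position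
`N = ⌊1/α⌋`, so `β = Δ α` satisfies `1/β + 1/β^(N+1) ≤ 1`, i.e. `(β - 1) β^N ≥ 1`.
Writing `β - 1 = α f`, this gives `1 ≤ α f e^(f)` because `N ≤ 1/α`, hence `1 ≤ α e^(2f)` and
`f ≥ -log α / 2`, which tends to `∞`.
-/

lemma ceil_add_sub_ceil_mem_Icc (x : ℝ) {s : ℝ} (hs0 : 0 ≤ s) (hs1 : s ≤ 1) :
    ⌈x + s⌉ - ⌈x⌉ ∈ Set.Icc (0 : ℤ) 1 := by
  have hlo : ⌈x⌉ ≤ ⌈x + s⌉ := Int.ceil_le_ceil (by linarith)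
  have hhi : ⌈x + s⌉ ≤ ⌈x⌉ + 1 := by
    rw [← Int.ceil_add_one]
    exact Int.ceil_le_ceil (by linarith)
  exact ⟨by omega, by omega⟩

lemma upperWord_slope_pos (α : ℝ) : 0 < α - ⌈α⌉ + 1 := by
  linarith [Int.ceil_lt_add_one α]

lemma upperWord_slope_le_one (α : ℝ) : α - ⌈α⌉ + 1 ≤ 1 := by
  linarith [Int.le_ceil α]

theorem upperWord_mem_Icc (α : ℝ) (n : ℕ) : upperWord α n ∈ Set.Icc (⌈α⌉ - 1) ⌈α⌉ := by
  obtain ⟨hlo, hhi⟩ := ceil_add_sub_ceil_mem_Icc ((α - ⌈α⌉ + 1) * n)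
    (upperWord_slope_pos α).le (upperWord_slope_le_one α)
  rw [upperWord, mul_add_one]
  exact ⟨by omega, by omega⟩

theorem upperWord_zero (α : ℝ) : upperWord α 0 = ⌈α⌉ := by
  have hslope : ⌈α - ⌈α⌉ + 1⌉ = 1 :=
    Int.ceil_eq_iff.2 ⟨by norm_num [upperWord_slope_pos], by simpa using upperWord_slope_le_one α⟩
  simp [upperWord, hslope]

lemma ceil_eq_one_of_pos_of_le_one {α : ℝ} (h0 : 0 < α) (h1 : α ≤ 1) : ⌈α⌉ = 1 :=
  Int.ceil_eq_iff.2 ⟨by norm_num [h0], by simpa using h1⟩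

lemma mul_floor_inv_le_one {α : ℝ} (h0 : 0 < α) : α * ⌊α⁻¹⌋₊ ≤ 1 := by
  calc α * ⌊α⁻¹⌋₊ ≤ α * α⁻¹ := by gcongr; exact Nat.floor_le (inv_nonneg.2 h0.le)
    _ = 1 := mul_inv_cancel₀ h0.ne'

lemma one_lt_mul_floor_inv_add_one {α : ℝ} (h0 : 0 < α) : 1 < α * (⌊α⁻¹⌋₊ + 1) := by
  calc 1 = α * α⁻¹ := (mul_inv_cancel₀ h0.ne').symm
    _ < α * (⌊α⁻¹⌋₊ + 1) := by gcongr; exact Nat.lt_floor_add_one _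

theorem upperWord_floor_inv {α : ℝ} (h0 : 0 < α) (h1 : α ≤ 1) : upperWord α ⌊α⁻¹⌋₊ = 1 := by
  have hceil := ceil_eq_one_of_pos_of_le_one h0 h1
  have hle : ⌈α * ⌊α⁻¹⌋₊⌉ ≤ 1 := Int.ceil_le.2 (by exact_mod_cast mul_floor_inv_le_one h0)
  have hgt : 1 < ⌈α * (⌊α⁻¹⌋₊ + 1)⌉ :=
    Int.lt_ceil.2 (by exact_mod_cast one_lt_mul_floor_inv_add_one h0)
  have hmem := upperWord_mem_Icc α ⌊α⁻¹⌋₊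
  rw [upperWord, hceil] at hmem ⊢
  simp only [Int.cast_one, sub_add_cancel, Set.mem_Icc] at hmem ⊢
  omega

lemma one_le_floor_inv {α : ℝ} (h0 : 0 < α) (h1 : α ≤ 1) : 1 ≤ ⌊α⁻¹⌋₊ :=
  Nat.le_floor (by simpa using one_le_inv₀ h0 |>.2 h1)

section Expansion

variable {α β : ℝ}

lemma upperWord_div_pow_nonneg (hα : 0 < α) (hβ : 0 < β) (n : ℕ) :
    0 ≤ (upperWord α n : ℝ) / β ^ (n + 1) := by
  have : 0 ≤ upperWord α n := by
    linarith [(upperWord_mem_Icc α n).1, Int.one_le_ceil_iff.2 hα]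
  positivity

theorem summable_upperWord_div_pow (hα : 0 < α) (hβ : 1 < β) :
    Summable fun n : ℕ => (upperWord α n : ℝ) / β ^ (n + 1) := by
  have hβ0 : 0 < β := one_pos.trans hβ
  have hgeom : Summable fun n : ℕ => (⌈α⌉ : ℝ) * (β⁻¹) ^ n :=
    (summable_geometric_of_lt_one (by positivity) (inv_lt_one_of_one_lt₀ hβ)).mul_left _
  refine hgeom.of_nonneg_of_le (upperWord_div_pow_nonneg hα hβ0) fun n => ?_
  have hdigit : (upperWord α n : ℝ) ≤ ⌈α⌉ := by exact_mod_cast (upperWord_mem_Icc α n).2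
  have hceil : (1 : ℤ) ≤ ⌈α⌉ := Int.one_le_ceil_iff.2 hα
  have hceil' : (0 : ℝ) ≤ ⌈α⌉ := by exact_mod_cast hceil.trans' zero_le_one
  calc (upperWord α n : ℝ) / β ^ (n + 1) ≤ ⌈α⌉ / β ^ (n + 1) := by gcongr
    _ ≤ ⌈α⌉ / β ^ n := by gcongr <;> first | exact hβ.le | exact Nat.le_succ n
    _ = ⌈α⌉ * (β⁻¹) ^ n := by rw [inv_pow, div_eq_mul_inv]

theorem one_le_sub_one_mul_pow_floor_inv (h0 : 0 < α) (h1 : α ≤ 1) (hβ : 1 < β)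
    (hsum : ∑' n : ℕ, (upperWord α n : ℝ) / β ^ (n + 1) = 1) :
    1 ≤ (β - 1) * β ^ ⌊α⁻¹⌋₊ := by
  set N := ⌊α⁻¹⌋₊
  have hβ0 : 0 < β := one_pos.trans hβ
  have hN : 0 ≠ N := (Nat.one_le_iff_ne_zero.1 (one_le_floor_inv h0 h1)).symm
  have htwo : 1 / β + 1 / β ^ (N + 1) ≤ 1 := by
    have := (summable_upperWord_div_pow h0 hβ).sum_le_tsum {0, N}
      (fun n _ => upperWord_div_pow_nonneg h0 hβ0 n)
    rwa [hsum, Finset.sum_pair hN, upperWord_zero, ceil_eq_one_of_pos_of_le_one h0 h1,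
      upperWord_floor_inv h0 h1, zero_add, pow_one, Int.cast_one] at this
  have hpow : 0 < β ^ N := pow_pos hβ0 N
  rw [div_add_div _ _ hβ0.ne' (pow_pos hβ0 _).ne', div_le_one (by positivity)] at htwo
  nlinarith [pow_succ β N]

end Expansion

theorem neg_log_div_two_le_of_one_le_sub_one_mul_pow {α β : ℝ} {N : ℕ} (hα : 0 < α)
    (hβ : 1 ≤ β) (hN : α * N ≤ 1) (h : 1 ≤ (β - 1) * β ^ N) :
    -Real.log α / 2 ≤ (β - 1) / α := by
  set f := (β - 1) / α
  have hf : 0 ≤ f := div_nonneg (sub_nonneg.2 hβ) hα.le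
  have hβf : β - 1 = α * f := (mul_div_cancel₀ _ hα.ne').symm
  have hpow : β ^ N ≤ Real.exp f :=
    calc β ^ N ≤ Real.exp (β - 1) ^ N := by
          gcongr; linarith [Real.add_one_le_exp (β - 1)]
      _ = Real.exp ((α * N) * f) := by rw [← Real.exp_nat_mul, hβf]; ring_nf
      _ ≤ Real.exp f := Real.exp_le_exp.2 (mul_le_of_le_one_left hf hN)
  have hexp : 1 ≤ α * Real.exp (2 * f) :=
    calc 1 ≤ (β - 1) * Real.exp f := h.trans (by gcongr)
      _ = (α * f) * Real.exp f := by rw [hβf]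
      _ ≤ (α * Real.exp f) * Real.exp f := by
          gcongr; linarith [Real.add_one_le_exp f]
      _ = α * Real.exp (2 * f) := by rw [two_mul, Real.exp_add]; ring
  have hlog : -(2 * f) ≤ Real.log α := by
    rwa [Real.le_log_iff_exp_le hα, Real.exp_neg, inv_le_iff_one_le_mul₀ (Real.exp_pos _)]
  linarith

/-- `(Δ(α) − 1)/α → ∞` as `α → 0⁺`; in particular `Δ` has no finite right derivative at 0. -/
theorem devilStaircase_right_derivative_at_zero (Δ : ℝ → ℝ) (hΔ : IsDevilStaircase Δ) :
    Tendsto (fun α : ℝ => (Δ α - 1) / α) (nhdsWithin 0 (Set.Ioi (0 : ℝ))) atTop := by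
  have hlog : Tendsto (fun α : ℝ => -Real.log α / 2) (nhdsWithin 0 (Set.Ioi 0)) atTop :=
    (tendsto_neg_atBot_atTop.comp Real.tendsto_log_nhdsGT_zero).atTop_div_const two_pos
  refine tendsto_atTop_mono' _ ?_ hlog
  filter_upwards [Ioc_mem_nhdsGT one_pos] with α ⟨hα0, hα1⟩
  obtain ⟨⟨hβ, hsum⟩, -⟩ := hΔ.2 α hα0
  exact neg_log_div_two_le_of_one_le_sub_one_mul_pow hα0 hβ.le (mul_floor_inv_le_one hα0)
    (one_le_sub_one_mul_pow_floor_inv hα0 hα1 hβ hsum)
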